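/- Let I be an interval Markov chain, M a Markov chain satisfying I under the at-every-step semantics with degree 1 whose satisfaction relation is not a partial bijection (i.e., some state s̄ of I is related to at least two states of M), and α a state label. Then there exists a Markov chain M₁ satisfying I under the at-every-step semantics whose state set is a strict subset of the states of M, with P^{M₁}(◊α) ≤ P^{M}(◊α). Dually, there exists such an M₂ with strictly fewer states and P^{M₂}(◊α) ≥ P^{M}(◊α). -/

import Mathlib

open Classical

structure MC (S : Type) (A : Type) where
  s0 : S
  p : S → S → ℝ
  nonneg : ∀ s s', 0 ≤ p s s'
  sum_one : ∀ s, ∑ᶠ s', p s s' = 1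
  V : S → Set A

namespace MC

variable {S A : Type}

/-- Probability of a finite path (product of transition probabilities). -/
def pathProb (p : S → S → ℝ) : S → List S → ℝ
  | _, [] => 1
  | s, s' :: l => p s s' * pathProb p s' l

/-- `UntilPath φ ψ s l` : starting from `s`, the (nonempty) suffix `l` first reaches a
`ψ`-state at its last position, with `φ` holding at all strictly earlier positions after
the start. -/
inductive UntilPath (φ ψ : S → Prop) : S → List S → Prop
  | single {s s' : S} (h : ψ s') : UntilPath φ ψ s [s']
  | cons {s s' : S} {l : List S} (hψ : ¬ ψ s') (hφ : φ s') (h : UntilPath φ ψ s' l) :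
      UntilPath φ ψ s (s' :: l)

/-- `P_s(φ U ψ)` : first-passage sum over until-paths. -/
noncomputable def untilProb (p : S → S → ℝ) (φ ψ : S → Prop) (s : S) : ℝ :=
  ∑' l : {l : List S // UntilPath φ ψ s l}, pathProb p s l.1

/-- `P_s(◊ψ)` : probability of eventually reaching a `ψ`-state from `s`. -/
noncomputable def reachProb (p : S → S → ℝ) (ψ : S → Prop) (s : S) : ℝ :=
  if ψ s then 1 else untilProb p (fun _ => True) ψ s

/-- `P^M(◊α)` : probability of eventually reaching a state labeled `α` from the initial
state of `M`. -/
noncomputable def Preach (M : MC S A) (α : Set A) : ℝ :=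
  reachProb M.p (fun s => M.V s = α) M.s0

/-- Reachability via positive-probability transitions. -/
def Reaches (p : S → S → ℝ) : S → S → Prop :=
  Relation.ReflTransGen fun a b => 0 < p a b

end MC

/-- Interval Markov chain: each transition carries an interval `[Plo, Phi] ⊆ [0,1]`. -/
structure IMC (S : Type) (A : Type) where
  s0 : S
  Plo : S → S → ℝ
  Phi : S → S → ℝ
  V : S → Set A

/-- Once-and-for-all satisfaction `M ⊨ᵒ I`. -/
def SatO {S A : Type} (M : MC S A) (I : IMC S A) : Prop :=
  M.s0 = I.s0 ∧ M.V = I.V ∧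
    ∀ s, MC.Reaches M.p M.s0 s → ∀ s', M.p s s' ∈ Set.Icc (I.Plo s s') (I.Phi s s')

/-- `R` is an at-every-step satisfaction relation between `M` and `I`. -/
def IsSatRel {T S A : Type} (M : MC T A) (I : IMC S A) (R : T → S → Prop) : Prop :=
  R M.s0 I.s0 ∧
    ∀ t s, R t s → M.V t = I.V s ∧
      ∃ δ : T → S → ℝ,
        (∀ t' s', 0 ≤ δ t' s') ∧
        (∀ t', 0 < M.p t t' → ∑ᶠ s', δ t' s' = 1) ∧
        (∀ s', (∑ᶠ t', M.p t t' * δ t' s') ∈ Set.Icc (I.Plo s s') (I.Phi s s')) ∧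
        (∀ t' s', 0 < δ t' s' → R t' s')

/-- At-every-step satisfaction `M ⊨ᵃ I`. -/
def SatA {T S A : Type} (M : MC T A) (I : IMC S A) : Prop :=
  ∃ R, IsSatRel M I R

/-- `M` satisfies `I` with degree `n`. -/
def SatADeg {T S A : Type} (n : ℕ) (M : MC T A) (I : IMC S A) : Prop :=
  ∃ R, IsSatRel M I R ∧ ∀ t, {s | R t s}.ncard ≤ n

/-- Combined transition function on the disjoint union of two Markov chains. -/
def sumP {S T A : Type} (M : MC S A) (N : MC T A) : S ⊕ T → S ⊕ T → ℝ
  | .inl a, .inl b => M.p a b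
  | .inr a, .inr b => N.p a b
  | _, _ => 0

/-- Combined labelling on the disjoint union. -/
def sumV {S T A : Type} (M : MC S A) (N : MC T A) : S ⊕ T → Set A :=
  Sum.elim M.V N.V

/-- Probabilistic bisimilarity of two Markov chains. -/
def Bisimilar {S T A : Type} (M : MC S A) (N : MC T A) : Prop :=
  ∃ B : (S ⊕ T) → (S ⊕ T) → Prop,
    Equivalence B ∧ B (Sum.inl M.s0) (Sum.inr N.s0) ∧
    ∀ a b, B a b → sumV M N a = sumV M N b ∧
      ∀ C : Set (S ⊕ T), (∀ x y, B x y → (x ∈ C ↔ y ∈ C)) →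
        (∑ᶠ c ∈ C, sumP M N a c) = ∑ᶠ c ∈ C, sumP M N b c

/-!
Merging `t₂` into `t₁` is lumping along `mergeMap`, the merged state moving like a chosen
`c ∈ {t₁, t₂}`. Averaging each correspondence function over the blocks shows that the merged
chain still satisfies `I`: degree 1 forces `t₁`, `t₂` and `c` to be related to `s̄` alone.

Reachability probabilities are the least non-negative solutions of `x = 1` on target states and
`x = P x` elsewhere. If `c` has the smaller value in `M`, the values of `M` form a supersolution
of the merged chain, which gives `M₁`. For `M₂`, choosing `c` by its value in `M` fails: if `t₁`
moves surely to `t₂` and `t₂` surely to the target, both have value `1`, but `c = t₁` makes the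
merged state loop on itself. Instead, for a discount `γ < 1` the equations are a contraction,
and choosing `c` to maximise the merged value makes it stable against the other row (policy
improvement), so the merged values form a supersolution for `γ • M`; a choice that occurs for
`γ` arbitrarily close to `1` survives the limit `γ → 1`.
-/

open Filter Topology

theorem Finset.sum_eq_sum_sum_preimage_cons {σ β : Type*} [Fintype σ] [AddCommMonoid β]
    (L : Finset (List σ)) (hL : [] ∉ L) (f : List σ → β) :
    ∑ l ∈ L, f l =
      ∑ a, ∑ l ∈ L.preimage (List.cons a) List.cons_injective.injOn, f (a :: l) := by
  rw [Finset.sum_sigma']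
  symm
  refine Finset.sum_bij (fun x _ => x.1 :: x.2) ?_ ?_ ?_ (fun _ _ => rfl)
  · intro x hx
    simpa using hx
  · rintro ⟨a, l⟩ _ ⟨b, m⟩ _ h
    simp only [List.cons.injEq] at h
    obtain ⟨rfl, rfl⟩ := h
    rfl
  · intro l hl
    cases l with
    | nil => exact absurd hl hL
    | cons a l => exact ⟨⟨a, l⟩, by simpa using hl, rfl⟩

namespace MC

section Paths

variable {σ : Type} {p : σ → σ → ℝ} {ψ : σ → Prop}

theorem pathProb_nonneg (hp : ∀ a b, 0 ≤ p a b) (s : σ) (l : List σ) :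
    0 ≤ pathProb p s l := by
  induction l generalizing s with
  | nil => exact zero_le_one
  | cons a l ih => exact mul_nonneg (hp s a) (ih a)

theorem pathProb_smul (γ : ℝ) (p : σ → σ → ℝ) (s : σ) (l : List σ) :
    pathProb (γ • p) s l = γ ^ l.length * pathProb p s l := by
  induction l generalizing s with
  | nil => simp [pathProb]
  | cons a l ih =>
    simp only [pathProb, ih, Pi.smul_apply, smul_eq_mul, List.length_cons, pow_succ]
    ring

theorem UntilPath.ne_nil {φ : σ → Prop} {s : σ} {l : List σ} (h : UntilPath φ ψ s l) :
    l ≠ [] := by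
  cases h <;> simp

theorem untilPath_cons_iff_of_pos {s a : σ} {l : List σ} (ha : ψ a) :
    UntilPath (fun _ => True) ψ s (a :: l) ↔ l = [] := by
  constructor
  · rintro (_ | ⟨hψ, -, -⟩)
    · rfl
    · exact absurd ha hψ
  · rintro rfl
    exact .single ha

theorem untilPath_cons_iff_of_neg {s a : σ} {l : List σ} (ha : ¬ ψ a) :
    UntilPath (fun _ => True) ψ s (a :: l) ↔ UntilPath (fun _ => True) ψ a l := by
  constructor
  · rintro (h | ⟨-, -, h⟩)
    · exact absurd h ha
    · exact h
  · exact .cons ha trivial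

def untilPathEquivSigma (ψ : σ → Prop) (s : σ) :
    {l // UntilPath (fun _ => True) ψ s l} ≃
      Σ a, {l // UntilPath (fun _ => True) ψ s (a :: l)} where
  toFun
    | ⟨a :: l, h⟩ => ⟨a, l, h⟩
    | ⟨[], h⟩ => absurd rfl h.ne_nil
  invFun x := ⟨x.1 :: x.2.1, x.2.2⟩
  left_inv
    | ⟨_ :: _, _⟩ => rfl
    | ⟨[], h⟩ => absurd rfl h.ne_nil
  right_inv _ := rfl

theorem reachProb_nonneg (hp : ∀ a b, 0 ≤ p a b) (s : σ) : 0 ≤ reachProb p ψ s := by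
  unfold reachProb
  split_ifs
  · exact zero_le_one
  · exact tsum_nonneg fun l => pathProb_nonneg hp s l.1

theorem reachProb_of_pos {s : σ} (h : ψ s) : reachProb p ψ s = 1 := if_pos h

end Paths

section Reach

variable {σ : Type} [Fintype σ] {p : σ → σ → ℝ} {ψ : σ → Prop}

theorem sum_pathProb_le_of_supersolution (hp : ∀ a b, 0 ≤ p a b) {z : σ → ℝ}
    (hz0 : ∀ s, 0 ≤ z s) (hz1 : ∀ s, ψ s → 1 ≤ z s)
    (hz : ∀ s, ¬ ψ s → ∑ s', p s s' * z s' ≤ z s) (n : ℕ) (s : σ)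
    (L : Finset (List σ))
    (hL : ∀ l ∈ L, UntilPath (fun _ => True) ψ s l ∧ l.length ≤ n) :
    ∑ l ∈ L, pathProb p s l ≤ ∑ s', p s s' * z s' := by
  induction n generalizing s L with
  | zero =>
    have hempty : L = ∅ := Finset.eq_empty_of_forall_notMem fun l hl =>
      (hL l hl).1.ne_nil (List.eq_nil_of_length_eq_zero (Nat.le_zero.mp (hL l hl).2))
    rw [hempty, Finset.sum_empty]
    exact Finset.sum_nonneg fun a _ => mul_nonneg (hp s a) (hz0 a)
  | succ n ih =>
    rw [Finset.sum_eq_sum_sum_preimage_cons L fun h => (hL [] h).1.ne_nil rfl]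
    refine Finset.sum_le_sum fun a _ => ?_
    simp only [pathProb, ← Finset.mul_sum]
    refine mul_le_mul_of_nonneg_left ?_ (hp s a)
    by_cases ha : ψ a
    · have hsub : L.preimage (List.cons a) List.cons_injective.injOn ⊆ {[]} := fun l hl =>
        Finset.mem_singleton.mpr <|
          (untilPath_cons_iff_of_pos ha).mp (hL _ (Finset.mem_preimage.mp hl)).1
      calc _ ≤ ∑ l ∈ {[]}, pathProb p a l :=
            Finset.sum_le_sum_of_subset_of_nonneg hsub fun l _ _ => pathProb_nonneg hp a l
        _ = 1 := by simp [pathProb]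
        _ ≤ z a := hz1 a ha
    · refine (ih a _ fun l hl => ?_).trans (hz a ha)
      obtain ⟨hpath, hlen⟩ := hL _ (Finset.mem_preimage.mp hl)
      exact ⟨(untilPath_cons_iff_of_neg ha).mp hpath, by simpa using hlen⟩

theorem sum_pathProb_untilPath_le (hp : ∀ a b, 0 ≤ p a b) {z : σ → ℝ}
    (hz0 : ∀ s, 0 ≤ z s) (hz1 : ∀ s, ψ s → 1 ≤ z s)
    (hz : ∀ s, ¬ ψ s → ∑ s', p s s' * z s' ≤ z s) (s : σ)
    (u : Finset {l // UntilPath (fun _ => True) ψ s l}) :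
    ∑ l ∈ u, pathProb p s l.1 ≤ ∑ s', p s s' * z s' := by
  refine (Finset.sum_map u (Function.Embedding.subtype _) (pathProb p s)).symm.trans_le ?_
  refine sum_pathProb_le_of_supersolution hp hz0 hz1 hz
    ((u.map (Function.Embedding.subtype _)).sup List.length) s _ fun l hl => ?_
  obtain ⟨l', -, rfl⟩ := Finset.mem_map.mp hl
  exact ⟨l'.2, Finset.le_sup hl⟩

variable (hp : ∀ a b, 0 ≤ p a b) (hs : ∀ a, ∑ b, p a b ≤ 1)
include hp hs

theorem summable_pathProb_untilPath (s : σ) :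
    Summable fun l : {l // UntilPath (fun _ => True) ψ s l} => pathProb p s l.1 :=
  summable_of_sum_le (fun l => pathProb_nonneg hp s l.1)
    (sum_pathProb_untilPath_le hp (z := 1) (fun _ => zero_le_one) (fun _ _ => le_rfl)
      (fun a _ => by simpa using hs a) s)

theorem reachProb_le_of_supersolution {z : σ → ℝ}
    (hz0 : ∀ s, 0 ≤ z s) (hz1 : ∀ s, ψ s → 1 ≤ z s)
    (hz : ∀ s, ¬ ψ s → ∑ s', p s s' * z s' ≤ z s) (s : σ) :
    reachProb p ψ s ≤ z s := by
  unfold reachProb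
  split_ifs with hψ
  · exact hz1 s hψ
  · exact ((summable_pathProb_untilPath hp hs s).tsum_le_of_sum_le
      (sum_pathProb_untilPath_le hp hz0 hz1 hz s)).trans (hz s hψ)

theorem reachProb_eq_sum {s : σ} (hψ : ¬ ψ s) :
    reachProb p ψ s = ∑ a, p s a * reachProb p ψ a := by
  have hsum : Summable fun x => pathProb p s ((untilPathEquivSigma ψ s).symm x).1 :=
    (untilPathEquivSigma ψ s).symm.summable_iff.mpr (summable_pathProb_untilPath hp hs s)
  rw [reachProb, if_neg hψ, untilProb, ← (untilPathEquivSigma ψ s).symm.tsum_eq,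
    hsum.tsum_sigma, tsum_fintype]
  refine Finset.sum_congr rfl fun a _ => ?_
  simp only [untilPathEquivSigma, Equiv.coe_fn_symm_mk, pathProb]
  rw [tsum_mul_left]
  congr 1
  by_cases ha : ψ a
  · rw [reachProb, if_pos ha,
      ← (Equiv.subtypeEquivRight fun l => (untilPath_cons_iff_of_pos (s := s) ha).symm).tsum_eq,
      tsum_eq_single (⟨[], rfl⟩ : {l : List σ // l = []}) fun l hl =>
        absurd (Subtype.ext l.2) hl]
    rfl
  · rw [reachProb, if_neg ha, untilProb,
      ← (Equiv.subtypeEquivRight fun l => (untilPath_cons_iff_of_neg (s := s) ha).symm).tsum_eq]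
    rfl

theorem tendsto_reachProb_smul (s : σ) :
    Tendsto (fun γ : ℝ => reachProb (γ • p) ψ s) (𝓝[<] 1) (𝓝 (reachProb p ψ s)) := by
  by_cases hψ : ψ s
  · simp only [reachProb_of_pos hψ]
    exact tendsto_const_nhds
  simp only [reachProb, hψ, ↓reduceIte, untilProb, pathProb_smul]
  refine tendsto_tsum_of_dominated_convergence (summable_pathProb_untilPath hp hs s)
    (fun l => ?_) ?_
  · simpa using (((continuous_pow l.1.length).tendsto 1).mono_left nhdsWithin_le_nhds).mul_const
      (pathProb p s l.1)
  · filter_upwards [Ioo_mem_nhdsLT zero_lt_one] with γ hγ l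
    have hl := pathProb_nonneg hp s l.1
    rw [Real.norm_eq_abs, abs_of_nonneg (mul_nonneg (pow_nonneg hγ.1.le _) hl)]
    exact mul_le_of_le_one_left hl (pow_le_one₀ hγ.1.le hγ.2.le)

end Reach

section Contraction

variable {σ : Type} [Fintype σ] {p : σ → σ → ℝ} {ψ : σ → Prop}

theorem le_reachProb_of_subsolution (hp : ∀ a b, 0 ≤ p a b) (hs : ∀ a, ∑ b, p a b < 1)
    {x : σ → ℝ} (hx1 : ∀ s, ψ s → x s ≤ 1) (hx : ∀ s, ¬ ψ s → x s ≤ ∑ s', p s s' * x s')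
    (s : σ) : x s ≤ reachProb p ψ s := by
  -- maximum principle: where `x - reachProb p ψ` is largest, the strict contraction forces it `≤ 0`
  set y := reachProb p ψ
  obtain ⟨m, -, hm⟩ :=
    Finset.exists_max_image Finset.univ (fun s => x s - y s) ⟨s, Finset.mem_univ s⟩
  suffices x m - y m ≤ 0 by linarith [hm s (Finset.mem_univ s)]
  by_contra! hpos
  by_cases hψ : ψ m
  · linarith [hx1 m hψ, reachProb_of_pos (p := p) hψ]
  have hy := reachProb_eq_sum hp (fun a => (hs a).le) hψ
  have : x m - y m ≤ (∑ s', p m s') * (x m - y m) := calc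
    x m - y m ≤ ∑ s', p m s' * (x s' - y s') := by
      simp only [mul_sub, Finset.sum_sub_distrib]
      linarith [hx m hψ]
    _ ≤ ∑ s', p m s' * (x m - y m) :=
      Finset.sum_le_sum fun a _ => mul_le_mul_of_nonneg_left (hm a (Finset.mem_univ a)) (hp m a)
    _ = (∑ s', p m s') * (x m - y m) := (Finset.sum_mul ..).symm
  nlinarith [mul_pos (sub_pos.mpr (hs m)) hpos]

theorem sum_mul_reachProb_le_of_reachProb_le {P Q : σ → σ → ℝ}
    (hP : ∀ a b, 0 ≤ P a b) (hPs : ∀ a, ∑ b, P a b ≤ 1)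
    (hQ : ∀ a b, 0 ≤ Q a b) (hQs : ∀ a, ∑ b, Q a b < 1) {m : σ}
    (hPQ : ∀ a, a ≠ m → P a = Q a)
    (hm : ¬ ψ m) (hle : reachProb Q ψ m ≤ reachProb P ψ m) :
    ∑ s', Q m s' * reachProb P ψ s' ≤ reachProb P ψ m := by
  by_contra! hlt
  -- then `reachProb P ψ` is a subsolution for `Q`, strict at `m`
  have hPQle : ∀ s, reachProb P ψ s ≤ reachProb Q ψ s :=
    le_reachProb_of_subsolution hQ hQs (fun s hs => (reachProb_of_pos hs).le) fun s hs => by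
      rcases eq_or_ne s m with rfl | hsm
      · exact hlt.le
      · rw [reachProb_eq_sum hP hPs hs, hPQ s hsm]
  have : ∑ s', Q m s' * reachProb P ψ s' ≤ reachProb Q ψ m := by
    rw [reachProb_eq_sum hQ (fun a => (hQs a).le) hm]
    exact Finset.sum_le_sum fun a _ => mul_le_mul_of_nonneg_left (hPQle a) (hQ m a)
  linarith

end Contraction

section Lump

variable {T U A : Type} [Fintype T] {p : T → T → ℝ} {π : T → U} {row : U → T}

variable (p π row) in
noncomputable def lumpP (u u' : U) : ℝ :=
  ∑ t with π t = u', p (row u) t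

theorem lumpP_nonneg (hp : ∀ a b, 0 ≤ p a b) (u u' : U) : 0 ≤ lumpP p π row u u' :=
  Finset.sum_nonneg fun t _ => hp _ t

theorem lumpP_smul (γ : ℝ) : lumpP (γ • p) π row = γ • lumpP p π row := by
  ext u u'
  simp [lumpP, Finset.mul_sum]

variable [Fintype U]

theorem sum_lumpP_mul (u : U) (x : U → ℝ) :
    ∑ u', lumpP p π row u u' * x u' = ∑ t, p (row u) t * x (π t) := by
  simp only [lumpP, Finset.sum_mul]
  rw [← Finset.sum_fiberwise Finset.univ π fun t => p (row u) t * x (π t)]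
  refine Finset.sum_congr rfl fun u' _ => Finset.sum_congr rfl fun t ht => ?_
  rw [(Finset.mem_filter.mp ht).2]

theorem sum_lumpP (u : U) : ∑ u', lumpP p π row u u' = ∑ t, p (row u) t := by
  simpa using sum_lumpP_mul (p := p) (π := π) (row := row) u 1

theorem reachProb_lumpP_le {ψ : T → Prop} (hp : ∀ a b, 0 ≤ p a b)
    (hs : ∀ a, ∑ b, p a b ≤ 1)
    (hrow : ∀ t, reachProb p ψ (row (π t)) ≤ reachProb p ψ t) (u : U) :
    reachProb (lumpP p π row) (fun u => ψ (row u)) u ≤ reachProb p ψ (row u) := by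
  refine reachProb_le_of_supersolution (lumpP_nonneg hp) (fun u => (sum_lumpP u).trans_le (hs _))
    (z := fun u => reachProb p ψ (row u)) (fun _ => reachProb_nonneg hp _)
    (fun u hu => (reachProb_of_pos (p := p) hu).ge) (fun u hu => ?_) u
  rw [sum_lumpP_mul, reachProb_eq_sum hp hs hu]
  exact Finset.sum_le_sum fun t _ => mul_le_mul_of_nonneg_left (hrow t) (hp _ t)

theorem sum_p (M : MC T A) (t : T) : ∑ t', M.p t t' = 1 := by
  rw [← finsum_eq_sum_of_fintype, M.sum_one]

variable (π row) in
noncomputable def lump (M : MC T A) : MC U A where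
  s0 := π M.s0
  p := lumpP M.p π row
  nonneg := lumpP_nonneg M.nonneg
  sum_one u := by rw [finsum_eq_sum_of_fintype, sum_lumpP, M.sum_p]
  V u := M.V (row u)

theorem isSatRel_lump {S : Type} [Fintype S] {M : MC T A} {I : IMC S A} {R : T → S → Prop}
    (hR : IsSatRel M I R) (hcons : ∀ t s, R t s → R (row (π t)) s) :
    IsSatRel (M.lump π row) I (fun u s => R (row u) s) := by
  refine ⟨hcons _ _ hR.1, fun u s hus => ?_⟩
  obtain ⟨hV, δ, hδ0, hδ1, hδI, hδR⟩ := hR.2 _ _ hus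
  -- the new correspondence averages `δ` over each block, weighted by the row of `row u`;
  -- on blocks of weight `0` it is `0`, through `0⁻¹ = 0`
  let δ' : U → S → ℝ := fun u' s' =>
    (lumpP M.p π row u u')⁻¹ * ∑ t with π t = u', M.p (row u) t * δ t s'
  have hblock : ∀ u' s', lumpP M.p π row u u' * δ' u' s' =
      ∑ t with π t = u', M.p (row u) t * δ t s' := by
    intro u' s'
    rcases eq_or_ne (lumpP M.p π row u u') 0 with h | h
    · have hzero := (Finset.sum_eq_zero_iff_of_nonneg fun t _ => M.nonneg (row u) t).mp h
      rw [h, zero_mul]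
      exact (Finset.sum_eq_zero fun t ht => by rw [hzero t ht, zero_mul]).symm
    · exact mul_inv_cancel_left₀ h _
  refine ⟨hV, δ', fun u' s' => ?_, fun u' hu' => ?_, fun s' => ?_, fun u' s' hpos => ?_⟩
  · exact mul_nonneg (inv_nonneg.mpr (lumpP_nonneg M.nonneg u u'))
      (Finset.sum_nonneg fun t _ => mul_nonneg (M.nonneg _ t) (hδ0 t s'))
  · have hrow : ∀ t, M.p (row u) t * ∑ s', δ t s' = M.p (row u) t := by
      intro t
      rcases (M.nonneg (row u) t).eq_or_lt with h | h
      · rw [← h, zero_mul]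
      · rw [← finsum_eq_sum_of_fintype, hδ1 t h, mul_one]
    rw [finsum_eq_sum_of_fintype, ← Finset.mul_sum, Finset.sum_comm]
    simp only [← Finset.mul_sum, hrow]
    exact inv_mul_cancel₀ hu'.ne'
  · show ∑ᶠ u', lumpP M.p π row u u' * δ' u' s' ∈ _
    rw [finsum_eq_sum_of_fintype]
    simp only [hblock]
    convert hδI s' using 1
    rw [finsum_eq_sum_of_fintype]
    exact Finset.sum_fiberwise _ _ _
  · obtain ⟨t, ht, hδt⟩ : ∃ t, π t = u' ∧ 0 < δ t s' := by
      by_contra! h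
      have : ∑ t with π t = u', M.p (row u) t * δ t s' = 0 := Finset.sum_eq_zero fun t ht => by
        rw [le_antisymm (h t (Finset.mem_filter.mp ht).2) (hδ0 t s'), mul_zero]
      simp [δ', this] at hpos
    exact ht ▸ hcons t s' (hδR t s' hδt)

end Lump

section Merge

variable {T A : Type} {t₁ t₂ : T}

variable (t₁) in
noncomputable def mergeRow (c : T) (u : ({t₂}ᶜ : Set T)) : T :=
  if u.1 = t₁ then c else u.1

noncomputable def mergeMap (hne : t₁ ≠ t₂) (t : T) : ({t₂}ᶜ : Set T) :=
  if h : t = t₂ then ⟨t₁, hne⟩ else ⟨t, h⟩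

theorem mergeRow_of_ne (c : T) {u : ({t₂}ᶜ : Set T)} (hu : u.1 ≠ t₁) :
    mergeRow t₁ c u = u.1 :=
  if_neg hu

variable (hne : t₁ ≠ t₂)

theorem mergeMap_val (t : T) : (mergeMap hne t).1 = if t = t₂ then t₁ else t := by
  unfold mergeMap
  split_ifs <;> rfl

theorem mergeRow_mergeMap (c t : T) :
    mergeRow t₁ c (mergeMap hne t) = if t = t₁ ∨ t = t₂ then c else t := by
  unfold mergeRow
  rw [mergeMap_val]
  by_cases h₂ : t = t₂
  · simp [h₂]
  · by_cases h₁ : t = t₁ <;> simp [h₁, h₂]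

theorem mergeMap_of_mem {t : T} (ht : t = t₁ ∨ t = t₂) : mergeMap hne t = ⟨t₁, hne⟩ :=
  Subtype.ext <| by rw [mergeMap_val]; split_ifs <;> tauto

theorem apply_mergeMap_val {β : Type*} {f : T → β} (hf : f t₁ = f t₂) (t : T) :
    f (mergeMap hne t).1 = f t := by
  rw [mergeMap_val]
  split_ifs with h
  exacts [h ▸ hf, rfl]

omit hne in
theorem apply_mergeRow {β : Type*} {f : T → β} (hf : f t₁ = f t₂) {c : T}
    (hc : c = t₁ ∨ c = t₂) (u : ({t₂}ᶜ : Set T)) : f (mergeRow t₁ c u) = f u.1 := by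
  unfold mergeRow
  split_ifs with hu
  · rcases hc with rfl | rfl <;> rw [hu, hf]
  · rfl

variable [Fintype T]

noncomputable abbrev mergeP (p : T → T → ℝ) (c : T) :
    ({t₂}ᶜ : Set T) → ({t₂}ᶜ : Set T) → ℝ :=
  lumpP p (mergeMap hne) (mergeRow t₁ c)

noncomputable def merge (M : MC T A) (c : T) : MC ({t₂}ᶜ : Set T) A :=
  M.lump (mergeMap hne) (mergeRow t₁ c)

theorem isSatRel_merge {S : Type} [Finite S] {M : MC T A} {I : IMC S A} {R : T → S → Prop}
    (hR : IsSatRel M I R) (hdeg : ∀ t, {s | R t s}.ncard ≤ 1) {sbar : S}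
    (h₁ : R t₁ sbar) (h₂ : R t₂ sbar) {c : T} (hc : c = t₁ ∨ c = t₂) :
    IsSatRel (M.merge hne c) I (fun u s => R (mergeRow t₁ c u) s) := by
  have := Fintype.ofFinite S
  refine isSatRel_lump hR fun t s hts => ?_
  rw [mergeRow_mergeMap]
  split_ifs with ht
  · have hs : s = sbar := by
      refine (Set.ncard_le_one (Set.toFinite _)).mp (hdeg t) s hts sbar ?_
      rcases ht with rfl | rfl <;> assumption
    rcases hc with rfl | rfl <;> rwa [hs]
  · exact hts

variable {p : T → T → ℝ} {ψ : T → Prop}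

theorem exists_reachProb_merge_le (hp : ∀ a b, 0 ≤ p a b) (hs : ∀ a, ∑ b, p a b ≤ 1) :
    ∃ c, (c = t₁ ∨ c = t₂) ∧ ∀ t,
      reachProb (mergeP hne p c) (fun u => ψ (mergeRow t₁ c u)) (mergeMap hne t) ≤
        reachProb p ψ t := by
  obtain ⟨c, hc, hmin⟩ :=
    Finset.exists_min_image {t₁, t₂} (reachProb p ψ) (Finset.insert_nonempty _ _)
  simp only [Finset.mem_insert, Finset.mem_singleton] at hc hmin
  have hrow : ∀ t, reachProb p ψ (mergeRow t₁ c (mergeMap hne t)) ≤ reachProb p ψ t := by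
    intro t
    rw [mergeRow_mergeMap]
    split_ifs with ht
    exacts [hmin t ht, le_rfl]
  exact ⟨c, hc, fun t => (reachProb_lumpP_le hp hs hrow _).trans (hrow t)⟩

theorem exists_reachProb_le_reachProb_merge_of_lt_one (hp : ∀ a b, 0 ≤ p a b)
    (hs : ∀ a, ∑ b, p a b < 1) (hψ : ψ t₁ ↔ ψ t₂) :
    ∃ c, (c = t₁ ∨ c = t₂) ∧ ∀ t,
      reachProb p ψ t ≤ reachProb (mergeP hne p c) (fun u => ψ u.1) (mergeMap hne t) := by
  have hq : ∀ c u u', 0 ≤ mergeP hne p c u u' := fun c => lumpP_nonneg hp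
  have hqs : ∀ c u, ∑ u', mergeP hne p c u u' < 1 := fun c u => (sum_lumpP u).trans_lt (hs _)
  set v := fun c => reachProb (mergeP hne p c) (fun u : ({t₂}ᶜ : Set T) => ψ u.1)
  let m : ({t₂}ᶜ : Set T) := ⟨t₁, hne⟩
  obtain ⟨c, hc, hmax⟩ :=
    Finset.exists_max_image {t₁, t₂} (fun c => v c m) (Finset.insert_nonempty _ _)
  simp only [Finset.mem_insert, Finset.mem_singleton] at hc hmax
  have hψmap : ∀ t, ψ (mergeMap hne t).1 ↔ ψ t := fun t => by
    rw [apply_mergeMap_val hne (propext hψ)]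
  refine ⟨c, hc, reachProb_le_of_supersolution hp (fun a => (hs a).le)
    (z := fun t => v c (mergeMap hne t)) (fun t => reachProb_nonneg (hq c) _)
    (fun t ht => (reachProb_of_pos (p := mergeP hne p c) ((hψmap t).mpr ht)).ge) fun t ht => ?_⟩
  have hsum : ∀ d, mergeRow t₁ d (mergeMap hne t) = t →
      ∑ t', p t t' * v c (mergeMap hne t') =
        ∑ u', mergeP hne p d (mergeMap hne t) u' * v c u' := by
    rintro d hd
    rw [sum_lumpP_mul, hd]
  have hψt : ¬ ψ (mergeMap hne t).1 := (hψmap t).not.mpr ht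
  by_cases ht₁₂ : t = t₁ ∨ t = t₂
  · have hmt : mergeMap hne t = m := mergeMap_of_mem hne ht₁₂
    rw [hsum t (by rw [mergeRow_mergeMap, if_pos ht₁₂]), hmt]
    refine sum_mul_reachProb_le_of_reachProb_le (hq c) (fun u => (hqs c u).le) (hq t) (hqs t)
      (fun u hu => ?_) (hmt ▸ hψt) (hmax t ht₁₂)
    have hu₁ : u.1 ≠ t₁ := fun h => hu (Subtype.ext h)
    funext u'
    simp only [lumpP, mergeRow_of_ne _ hu₁]
  · rw [hsum c (by rw [mergeRow_mergeMap, if_neg ht₁₂])]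
    exact (reachProb_eq_sum (hq c) (fun u => (hqs c u).le) hψt).ge

theorem exists_reachProb_le_reachProb_merge (hp : ∀ a b, 0 ≤ p a b)
    (hs : ∀ a, ∑ b, p a b ≤ 1) (hψ : ψ t₁ ↔ ψ t₂) :
    ∃ c, (c = t₁ ∨ c = t₂) ∧ ∀ t,
      reachProb p ψ t ≤ reachProb (mergeP hne p c) (fun u => ψ u.1) (mergeMap hne t) := by
  have hev : ∀ᶠ γ : ℝ in 𝓝[<] 1, ∃ c, (c = t₁ ∨ c = t₂) ∧ ∀ t,
      reachProb (γ • p) ψ t ≤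
        reachProb (γ • mergeP hne p c) (fun u => ψ u.1) (mergeMap hne t) := by
    filter_upwards [Ioo_mem_nhdsLT zero_lt_one] with γ hγ
    have hγp : ∀ a, ∑ b, (γ • p) a b < 1 := fun a => by
      simp only [Pi.smul_apply, smul_eq_mul, ← Finset.mul_sum]
      exact (mul_le_of_le_one_right hγ.1.le (hs a)).trans_lt hγ.2
    simpa only [lumpP_smul] using exists_reachProb_le_reachProb_merge_of_lt_one hne (p := γ • p)
      (fun a b => mul_nonneg hγ.1.le (hp a b)) hγp hψ
  obtain ⟨c, hc, hfreq⟩ : ∃ c, (c = t₁ ∨ c = t₂) ∧ ∃ᶠ γ : ℝ in 𝓝[<] 1, ∀ t,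
      reachProb (γ • p) ψ t ≤
        reachProb (γ • mergeP hne p c) (fun u => ψ u.1) (mergeMap hne t) := by
    have := hev.frequently
    simp only [or_and_right, exists_or, exists_eq_left, Filter.frequently_or_distrib] at this
    rcases this with h | h
    exacts [⟨t₁, Or.inl rfl, h⟩, ⟨t₂, Or.inr rfl, h⟩]
  refine ⟨c, hc, fun t => le_of_tendsto_of_tendsto_of_frequently (tendsto_reachProb_smul hp hs t)
    (tendsto_reachProb_smul (lumpP_nonneg hp) (fun u => (sum_lumpP u).trans_le (hs _)) _)
    (hfreq.mono fun γ h => h t)⟩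

theorem exists_preach_merge_le (M : MC T A) (α : Set A) :
    ∃ c, (c = t₁ ∨ c = t₂) ∧ (M.merge hne c).Preach α ≤ M.Preach α :=
  (exists_reachProb_merge_le hne (ψ := fun t => M.V t = α) M.nonneg fun t => (M.sum_p t).le).imp
    fun _ ⟨hc, h⟩ => ⟨hc, h M.s0⟩

theorem exists_le_preach_merge (M : MC T A) (hV : M.V t₁ = M.V t₂) (α : Set A) :
    ∃ c, (c = t₁ ∨ c = t₂) ∧ M.Preach α ≤ (M.merge hne c).Preach α := by
  obtain ⟨c, hc, h⟩ := exists_reachProb_le_reachProb_merge hne M.nonneg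
    (fun t => (M.sum_p t).le) (ψ := fun t => M.V t = α) (by rw [hV])
  refine ⟨c, hc, (h M.s0).trans_eq ?_⟩
  change _ = reachProb _ (fun u => M.V (mergeRow t₁ c u) = α) _
  simp only [apply_mergeRow hV hc]
  rfl

end Merge

end MC

/-- state merging.  If `M ⊨ᵃ I` with degree 1 and the satisfaction
relation is not a partial bijection (some `s̄` is related to two distinct states),
then there are at-every-step implementations `M₁`, `M₂` of `I` on strict subsets of the
states of `M` with `P^{M₁}(◊α) ≤ P^{M}(◊α)` and `P^{M₂}(◊α) ≥ P^{M}(◊α)`. -/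
theorem stmt14 {T S A : Type} [Finite T] [Finite S]
    (M : MC T A) (I : IMC S A) (α : Set A) (R : T → S → Prop)
    (hsat : IsSatRel M I R)
    (hdeg1 : ∀ t, {s | R t s}.ncard ≤ 1)
    (sbar : S) (t₁ t₂ : T) (hne : t₁ ≠ t₂) (h1 : R t₁ sbar) (h2 : R t₂ sbar) :
    (∃ U : Set T, U ⊂ Set.univ ∧ ∃ M₁ : MC U A,
      SatA M₁ I ∧ M₁.Preach α ≤ M.Preach α) ∧
    (∃ U : Set T, U ⊂ Set.univ ∧ ∃ M₂ : MC U A,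
      SatA M₂ I ∧ M.Preach α ≤ M₂.Preach α) := by
  have := Fintype.ofFinite T
  have hV : M.V t₁ = M.V t₂ := (hsat.2 t₁ sbar h1).1.trans (hsat.2 t₂ sbar h2).1.symm
  have hU : ({t₂}ᶜ : Set T) ⊂ Set.univ :=
    Set.ssubset_univ_iff.mpr (Set.compl_ne_univ.mpr (Set.singleton_nonempty t₂))
  have hsatA : ∀ c, c = t₁ ∨ c = t₂ → SatA (M.merge hne c) I :=
    fun c hc => ⟨_, MC.isSatRel_merge hne hsat hdeg1 h1 h2 hc⟩
  obtain ⟨c₁, hc₁, hle₁⟩ := M.exists_preach_merge_le hne α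
  obtain ⟨c₂, hc₂, hle₂⟩ := M.exists_le_preach_merge hne hV α
  exact ⟨⟨_, hU, _, hsatA c₁ hc₁, hle₁⟩, ⟨_, hU, _, hsatA c₂ hc₂, hle₂⟩⟩
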